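/- Let X be an NPC space and let g be a hyperbolic isometry of X with attracting point ξ₁ = ξ₊(g). Let ξ₂ ∈ ∂X be opposite ξ₁. Then g stabilizes ξ₂ if and only if ξ₂ = ξ₋(g). Consequently, if G is a group acting on X by isometries, ξ₁ is the attracting point of some hyperbolic element of G, and ξ₂ ∈ ∂X is opposite ξ₁, then every hyperbolic element of G with attracting point ξ₁ has repelling point ξ₂ if and only if G_{ξ₁} ≤ G_{ξ₂}. -/

import Mathlib

open Filter Set Topology Pointwise MeasureTheory

section MetricDefs

variable {X : Type*} [MetricSpace X]

/-- `γ` restricted to `s` is a unit-speed geodesic (isometric embedding of `s ⊆ ℝ`). -/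
def IsGeodesicOn (γ : ℝ → X) (s : Set ℝ) : Prop :=
  ∀ u ∈ s, ∀ v ∈ s, dist (γ u) (γ v) = |u - v|

/-- A geodesic segment parametrized by arclength on `[a,b]`, from `x` to `y`. -/
def IsGeodesicSegment (γ : ℝ → X) (a b : ℝ) (x y : X) : Prop :=
  a ≤ b ∧ γ a = x ∧ γ b = y ∧ IsGeodesicOn γ (Set.Icc a b)

/-- A geodesic metric space: any two points are joined by a geodesic. -/
def GeodesicSpace (X : Type*) [MetricSpace X] : Prop :=
  ∀ x y : X, ∃ γ : ℝ → X, IsGeodesicSegment γ 0 (dist x y) x y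

/-- A geodesic ray (unit-speed on `[0,∞)`). -/
def IsGeodesicRay (γ : ℝ → X) : Prop := IsGeodesicOn γ (Set.Ici 0)

/-- A geodesic line (unit-speed on all of `ℝ`). -/
def IsGeodesicLine (γ : ℝ → X) : Prop := IsGeodesicOn γ Set.univ

/-- CAT(0) space, via the CN (Bruhat–Tits) inequality, equivalent to the CAT(0)
comparison-triangle inequality for geodesic spaces. -/
def CAT0 (X : Type*) [MetricSpace X] : Prop :=
  GeodesicSpace X ∧ ∀ x y z m : X, dist y m = dist y z / 2 → dist z m = dist y z / 2 →
    dist x m ^ 2 ≤ (dist x y ^ 2 + dist x z ^ 2) / 2 - dist y z ^ 2 / 4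

/-- All geodesic triangles are `δ`-thin: each point on one side lies within `δ` of the
union of the other two sides. -/
def SlimTriangles (X : Type*) [MetricSpace X] (δ : ℝ) : Prop :=
  ∀ (x y z : X) (γ₁ γ₂ γ₃ : ℝ → X),
    IsGeodesicSegment γ₁ 0 (dist x y) x y →
    IsGeodesicSegment γ₂ 0 (dist y z) y z →
    IsGeodesicSegment γ₃ 0 (dist z x) z x →
    ∀ s ∈ Set.Icc (0:ℝ) (dist x y),
      ∃ p ∈ γ₂ '' Set.Icc (0:ℝ) (dist y z) ∪ γ₃ '' Set.Icc (0:ℝ) (dist z x),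
        dist (γ₁ s) p ≤ δ

/-- Gromov `δ`-hyperbolic (δ-thin geodesic triangles). -/
def GromovHyperbolic (X : Type*) [MetricSpace X] (δ : ℝ) : Prop :=
  0 ≤ δ ∧ SlimTriangles X δ

/-- An NPC space: a geodesic space that is either complete CAT(0), or proper and
Gromov-hyperbolic. -/
def NPCSpace (X : Type*) [MetricSpace X] : Prop :=
  GeodesicSpace X ∧
    ((CompleteSpace X ∧ CAT0 X) ∨ (ProperSpace X ∧ ∃ δ : ℝ, GromovHyperbolic X δ))

/-- Uniquely geodesic space. -/
def UniquelyGeodesic (X : Type*) [MetricSpace X] : Prop :=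
  ∀ (x y : X) (γ₁ γ₂ : ℝ → X), IsGeodesicSegment γ₁ 0 (dist x y) x y →
    IsGeodesicSegment γ₂ 0 (dist x y) x y → ∀ t ∈ Set.Icc (0:ℝ) (dist x y), γ₁ t = γ₂ t

/-- Two rays are asymptotic: they stay at bounded distance. -/
def AsympRays (γ₁ γ₂ : ℝ → X) : Prop :=
  ∃ C : ℝ, ∀ t : ℝ, 0 ≤ t → dist (γ₁ t) (γ₂ t) ≤ C

/-- The boundary points of the rays `γ₁, γ₂` are opposite: some geodesic line has
`γ₁`'s class as backward endpoint and `γ₂`'s class as forward endpoint. -/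
def OppositeEnds (γ₁ γ₂ : ℝ → X) : Prop :=
  ∃ L : ℝ → X, IsGeodesicLine L ∧ AsympRays (fun t => L (-t)) γ₁ ∧ AsympRays L γ₂

/-- The sequence `x` converges to the boundary point represented by the ray `γ`:
it goes to infinity and geodesic segments from `γ 0` to `x n` eventually fellow-travel
`γ` within a uniform bound (this is convergence in the cone topology for CAT(0) spaces,
and Gromov convergence for hyperbolic spaces). -/
def ConvergesToEnd (x : ℕ → X) (γ : ℝ → X) : Prop :=
  Tendsto (fun n => dist (γ 0) (x n)) atTop atTop ∧
  ∃ C : ℝ, ∀ t : ℝ, 0 ≤ t → ∀ σ : ℕ → ℝ → X,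
    (∀ n, IsGeodesicSegment (σ n) 0 (dist (γ 0) (x n)) (γ 0) (x n)) →
    ∀ᶠ n in atTop, dist (σ n t) (γ t) ≤ C

/-- Geodesically convex subset. -/
def GeodesicallyConvex (Y : Set X) : Prop :=
  ∀ x ∈ Y, ∀ y ∈ Y, ∀ γ : ℝ → X, IsGeodesicSegment γ 0 (dist x y) x y →
    ∀ t ∈ Set.Icc (0:ℝ) (dist x y), γ t ∈ Y

/-- `Z` is an absorbing set for the boundary point of the ray `ρ` within `Y`. -/
def IsAbsorbing (Y Z : Set X) (ρ : ℝ → X) : Prop :=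
  ∃ r : ℝ → ℝ, Tendsto r atTop atTop ∧
    ∀ᶠ t in atTop, ∀ y ∈ Y, dist (ρ t) y ≤ r t → y ∈ Z

/-- The path (induced length) pseudo-distance inside a subset `T` of `X`. -/
noncomputable def pathDist (T : Set X) (x y : X) : ENNReal :=
  ⨅ (f : ℝ → X) (_ : ContinuousOn f (Set.Icc 0 1)) (_ : Set.MapsTo f (Set.Icc 0 1) T)
    (_ : f 0 = x) (_ : f 1 = y), eVariationOn f (Set.Icc 0 1)

end MetricDefs

section ActionDefs

variable {X : Type*} [MetricSpace X] {G : Type*} [Group G] [MulAction G X]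

/-- `G` acts on `X` by isometries. -/
def IsometricAction (G X : Type*) [Group G] [MetricSpace X] [MulAction G X] : Prop :=
  ∀ g : G, Isometry fun x : X => g • x

/-- The action of `G` on `X` is (metrically) proper. -/
def ProperAction (G X : Type*) [Group G] [TopologicalSpace G] [MetricSpace X]
    [MulAction G X] : Prop :=
  ∀ (x : X) (r : ℝ), IsCompact {g : G | dist (g • x) x ≤ r}

/-- The action of `G` on `X` is locally discrete: around each point, some ball of
positive radius has open pointwise fixator. -/
def BoundedElt (X : Type*) [MetricSpace X] {G : Type*} [Group G] [MulAction G X]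
    (g : G) : Prop :=
  ∀ x : X, Bornology.IsBounded (Set.range fun n : ℤ => g ^ n • x)

/-- The ray `γ` represents the attracting point of `g`: all forward orbits of `g`
converge to the corresponding boundary point. -/
def AttractsTo (g : G) (γ : ℝ → X) : Prop :=
  IsGeodesicRay γ ∧ ∀ x : X, ConvergesToEnd (fun n => g ^ n • x) γ

/-- `γ` is a (labelled) axis of `g`: `g` translates along the geodesic line `γ`. -/
def IsAxialWith (g : G) (γ : ℝ → X) : Prop :=
  IsGeodesicLine γ ∧ ∃ k : ℝ, 0 < k ∧ ∀ t : ℝ, g • γ t = γ (t + k)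

/-- `g` is an axial isometry of `X`. -/
def IsAxial (X : Type*) [MetricSpace X] {G : Type*} [Group G] [MulAction G X]
    (g : G) : Prop :=
  ∃ γ : ℝ → X, IsAxialWith g γ

/-- `n ↦ gⁿ • x` is a quasi-isometric embedding of `ℤ` into `X`. -/
def QIHyperbolic (X : Type*) [MetricSpace X] {G : Type*} [Group G] [MulAction G X]
    (g : G) : Prop :=
  ∃ (x : X) (a b : ℝ), 0 < a ∧ 0 ≤ b ∧ ∀ m n : ℤ,
    a⁻¹ * |(m : ℝ) - (n : ℝ)| - b ≤ dist (g ^ m • x) (g ^ n • x) ∧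
    dist (g ^ m • x) (g ^ n • x) ≤ a * |(m : ℝ) - (n : ℝ)| + b

/-- `g` acts as a hyperbolic isometry of the NPC space `X`: axial in the complete CAT(0)
case, QI-hyperbolic in the proper Gromov-hyperbolic case. -/
def IsHyperbolicIsom (X : Type*) [MetricSpace X] {G : Type*} [Group G] [MulAction G X]
    (g : G) : Prop :=
  (CompleteSpace X ∧ CAT0 X ∧ IsAxial X g) ∨
  (ProperSpace X ∧ (∃ δ : ℝ, GromovHyperbolic X δ) ∧ QIHyperbolic X g)

/-- Translation length of `g` on `X` (the limit of `d(x, gⁿx)/n`, realized as an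
infimum by subadditivity). -/
noncomputable def translationLength (X : Type*) [MetricSpace X] {G : Type*} [Group G]
    [MulAction G X] (g : G) : ℝ :=
  sInf {r : ℝ | ∃ (x : X) (n : ℕ), 0 < n ∧ r = dist x (g ^ n • x) / n}

/-- The stabilizer in `G` of the boundary point represented by the ray `γ`. -/
def endStabilizer (hiso : IsometricAction G X) (γ : ℝ → X) : Subgroup G where
  carrier := {g : G | AsympRays (fun t => g • γ t) γ}
  one_mem' := ⟨0, fun t _ => by simp⟩
  mul_mem' := by
    rintro a b ⟨Ca, hCa⟩ ⟨Cb, hCb⟩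
    refine ⟨Cb + Ca, fun t ht => ?_⟩
    have h1 : dist ((a * b) • γ t) (a • γ t) = dist (b • γ t) (γ t) := by
      rw [mul_smul]
      exact (hiso a).dist_eq _ _
    calc dist ((a * b) • γ t) (γ t)
        ≤ dist ((a * b) • γ t) (a • γ t) + dist (a • γ t) (γ t) := dist_triangle _ _ _
      _ ≤ Cb + Ca := add_le_add (h1 ▸ hCb t ht) (hCa t ht)
  inv_mem' := by
    rintro a ⟨Ca, hCa⟩
    refine ⟨Ca, fun t ht => ?_⟩
    have h1 : dist (a⁻¹ • γ t) (γ t) = dist (γ t) (a • γ t) := by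
      have := (hiso a).dist_eq (a⁻¹ • γ t) (γ t)
      simp only [smul_inv_smul] at this
      exact this.symm
    rw [h1, dist_comm]
    exact hCa t ht

/-- The setwise stabilizer of `Y ⊆ X` in `G`. -/
def setStabilizer (G : Type*) {X : Type*} [Group G] [MulAction G X] (Y : Set X) :
    Subgroup G where
  carrier := {g : G | ∀ y : X, y ∈ Y ↔ g • y ∈ Y}
  one_mem' := fun y => by simp
  mul_mem' := by
    intro a b ha hb y
    rw [mul_smul]
    exact (hb y).trans (ha (b • y))
  inv_mem' := by
    intro a ha y
    have := ha (a⁻¹ • y)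
    rw [smul_inv_smul] at this
    exact this.symm

/-- The pointwise fixator of `Y ⊆ X` in `G`. -/
def fixator (G : Type*) {X : Type*} [Group G] [MulAction G X] (Y : Set X) :
    Subgroup G where
  carrier := {g : G | ∀ y ∈ Y, g • y = y}
  one_mem' := fun y _ => one_smul _ y
  mul_mem' := by
    intro a b ha hb y hy
    rw [mul_smul, hb y hy, ha y hy]
  inv_mem' := by
    intro a ha y hy
    conv_lhs => rw [← ha y hy]
    rw [inv_smul_smul]

/-- The set of common fixed points in `X` of a set of group elements. -/
def fixedSet (X : Type*) {G : Type*} [Group G] [MulAction G X] (S : Set G) : Set X :=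
  {x : X | ∀ g ∈ S, g • x = x}

/-- The action is locally discrete: around each point there is a ball of positive
radius whose fixator is open. -/
def LocallyDiscreteAction (G X : Type*) [Group G] [TopologicalSpace G] [MetricSpace X]
    [MulAction G X] : Prop :=
  ∀ x : X, ∃ r : ℝ, 0 < r ∧ IsOpen ((fixator G (Metric.closedBall x r) : Set G))

end ActionDefs

section GroupDefs

variable {G : Type*} [Group G]

/-- The parabolic set of `g`: elements with relatively compact forward `g`-conjugation
orbit. -/
def parSet [TopologicalSpace G] (g : G) : Set G :=
  {x : G | IsCompact (closure (Set.range fun n : ℕ => g ^ n * x * (g ^ n)⁻¹))}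

/-- The contraction set of `g` modulo the subgroup `K`: elements whose forward
`g`-conjugation orbit converges to the trivial coset in `G ⧸ K`. -/
def conSet [TopologicalSpace G] (g : G) (K : Subgroup G) : Set G :=
  {x : G | Tendsto (fun n : ℕ => ((g ^ n * x * (g ^ n)⁻¹ : G) : G ⧸ K)) atTop
    (𝓝 ((1 : G) : G ⧸ K))}

/-- A compact open subgroup. -/
def CompactOpen [TopologicalSpace G] (U : Subgroup G) : Prop :=
  IsCompact (U : Set G) ∧ IsOpen (U : Set G)

/-- The displacement index `|gUg⁻¹ : U ∩ gUg⁻¹|`. -/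
noncomputable def scaleIndex (g : G) (U : Subgroup G) : ℕ :=
  U.relIndex (U.map (MulAut.conj g).toMonoidHom)

/-- The scale of `g`: minimum of `|gUg⁻¹ : U ∩ gUg⁻¹|` over compact open subgroups. -/
noncomputable def scale [TopologicalSpace G] (g : G) : ℕ :=
  sInf {n : ℕ | ∃ U : Subgroup G, CompactOpen U ∧ scaleIndex g U = n}

/-- `U` is a minimizing (tidy) compact open subgroup for `g`. -/
def IsMinimizing [TopologicalSpace G] (g : G) (U : Subgroup G) : Prop :=
  CompactOpen U ∧ scaleIndex g U = scale g

/-- For a t.d.l.c. group, the modular function satisfies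
`Δ(g) = |gUg⁻¹ : U ∩ gUg⁻¹| / |U : U ∩ gUg⁻¹|` for every compact open subgroup `U`.
`ModularEq g s` says that `Δ(g) = s`. -/
def ModularEq [TopologicalSpace G] (g : G) (s : ℕ) : Prop :=
  ∀ U : Subgroup G, CompactOpen U → scaleIndex g U = s * scaleIndex g⁻¹ U

/-- `U₊ = ⋂_{n ≥ 0} gⁿ U g⁻ⁿ`. -/
def Uplus (g : G) (U : Subgroup G) : Subgroup G :=
  ⨅ n : ℕ, U.map (MulAut.conj (g ^ n)).toMonoidHom

/-- `U₋ = ⋂_{n ≤ 0} gⁿ U g⁻ⁿ`. -/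
def Uminus (g : G) (U : Subgroup G) : Subgroup G :=
  ⨅ n : ℕ, U.map (MulAut.conj ((g ^ n)⁻¹)).toMonoidHom

/-- `U` is tidy for `g` (conditions TA and TB of Willis). -/
def TidyFor [TopologicalSpace G] (g : G) (U : Subgroup G) : Prop :=
  CompactOpen U ∧
  (U : Set G) = (Uplus g U : Set G) * (Uminus g U : Set G) ∧
  IsClosed (⋃ n : ℕ, (fun h : G => g ^ n * h * (g ^ n)⁻¹) '' (Uplus g U : Set G))

/-- The nub of `g`: intersection of all minimizing (tidy) subgroups for `g`. -/
noncomputable def nub [TopologicalSpace G] (g : G) : Subgroup G :=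
  ⨅ (U : Subgroup G) (_ : IsMinimizing g U), U

/-- The scale of an automorphism `α`: minimum of `|α(U) : α(U) ∩ U|` over compact open
subgroups. -/
noncomputable def scaleAut [TopologicalSpace G] (α : G ≃* G) : ℕ :=
  sInf {n : ℕ | ∃ U : Subgroup G, CompactOpen U ∧ U.relIndex (U.map α.toMonoidHom) = n}

end GroupDefs

section TreeDefs

variable {X : Type*} [MetricSpace X]

/-- `x ≤_T y`: some geodesic ray from `x` to the end of `ρ` contained in `T` passes
through `y`. -/
def leTree (T : Set X) (ρ : ℝ → X) (x y : X) : Prop :=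
  ∃ γ : ℝ → X, IsGeodesicRay γ ∧ γ 0 = x ∧ AsympRays γ ρ ∧ γ '' Set.Ici (0:ℝ) ⊆ T ∧
    ∃ t : ℝ, 0 ≤ t ∧ γ t = y

/-- The branching function of the tree `T` (with distinguished end given by `ρ`)
based at `x₀`. -/
noncomputable def branching (T : Set X) (ρ : ℝ → X) (x₀ : X) (m : ℝ) : ℕ :=
  if 0 < m then
    Nat.card {y : X | leTree T ρ y x₀ ∧ pathDist T x₀ y = ENNReal.ofReal m}
  else 1

end TreeDefs

/-!
Both curvature conditions yield one tool: geodesic segments with nearby endpoints fellow-travel.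
It makes convergence to a boundary point insensitive to bounded perturbations of the sequence
and to replacing the ray by an asymptotic one, and makes the limit unique up to asymptoty. In
particular an isometry fixes its attracting point, which gives the easy direction.

Conversely, let `L` be a line from `ξ₁` to `ξ₂`. As `g` fixes both ends, every `gⁿ L` is a line
parallel to `L`, and `g⁻ⁿ L(0)` is shown to track `L` towards `ξ₂`. In the CAT(0) case, the
distance between parallel lines is constant; measured near `ξ₁` against the axis of `g`, it
places `g⁻ⁿ L(0)` near `L(n k)`, `k` being the translation length of `g`. In the hyperbolic
case, the orbit of `L(0)` stays `2δ`-close to `L` at coarsely bi-Lipschitz times; its forward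
half runs to `ξ₁`, so its backward half runs to `ξ₂`. The statement about `G` follows by conjugating `g` by elements of `G_{ξ₁}`.
-/

section Geodesics

variable {X : Type*} [MetricSpace X]

lemma abs_dist_sub_dist_le (a b a' b' : X) :
    |dist a b - dist a' b'| ≤ dist a a' + dist b b' := by
  simpa [Real.dist_eq] using dist_dist_dist_le a b a' b'

namespace IsGeodesicSegment

variable {γ : ℝ → X} {d u v : ℝ} {x y : X}

lemma dist_apply (h : IsGeodesicSegment γ 0 d x y) (hu : u ∈ Icc 0 d) (hv : v ∈ Icc 0 d) :
    dist (γ u) (γ v) = |u - v| :=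
  h.2.2.2 u hu v hv

lemma dist_source (h : IsGeodesicSegment γ 0 d x y) (hu : u ∈ Icc 0 d) : dist x (γ u) = u := by
  rw [← h.2.1, h.dist_apply ⟨le_rfl, h.1⟩ hu, zero_sub, abs_neg, abs_of_nonneg hu.1]

lemma dist_target (h : IsGeodesicSegment γ 0 d x y) (hu : u ∈ Icc 0 d) :
    dist (γ u) y = d - u := by
  rw [← h.2.2.1, h.dist_apply hu ⟨h.1, le_rfl⟩, abs_of_nonpos (by linarith [hu.2]), neg_sub]

end IsGeodesicSegment

namespace IsGeodesicLine

variable {L : ℝ → X}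

lemma dist_apply (hL : IsGeodesicLine L) (u v : ℝ) : dist (L u) (L v) = |u - v| :=
  hL u trivial v trivial

lemma isGeodesicRay (hL : IsGeodesicLine L) : IsGeodesicRay L :=
  fun u _ v _ => hL.dist_apply u v

lemma isGeodesicSegment (hL : IsGeodesicLine L) {a b : ℝ} (hab : a ≤ b) :
    IsGeodesicSegment (fun s => L (s + a)) 0 (dist (L a) (L b)) (L a) (L b) := by
  rw [hL.dist_apply, abs_of_nonpos (by linarith), neg_sub]
  refine ⟨by linarith, by simp, by simp, fun u _ v _ => ?_⟩
  simpa using hL.dist_apply (u + a) (v + a)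

lemma not_asympRays_comp_neg (hL : IsGeodesicLine L) : ¬ AsympRays L fun t => L (-t) := by
  rintro ⟨C, hC⟩
  have := hC (|C| + 1) (by positivity)
  rw [hL.dist_apply, abs_of_nonneg (by linarith [abs_nonneg C])] at this
  linarith [le_abs_self C, abs_nonneg C]

end IsGeodesicLine

namespace IsGeodesicRay

variable {γ : ℝ → X} {u : ℝ}

lemma dist_zero_apply (h : IsGeodesicRay γ) (hu : 0 ≤ u) : dist (γ 0) (γ u) = u := by
  rw [h 0 self_mem_Ici u hu, zero_sub, abs_neg, abs_of_nonneg hu]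

lemma isGeodesicSegment (h : IsGeodesicRay γ) (hu : 0 ≤ u) :
    IsGeodesicSegment γ 0 (dist (γ 0) (γ u)) (γ 0) (γ u) := by
  rw [h.dist_zero_apply hu]
  exact ⟨hu, rfl, rfl, fun v hv w hw => h v hv.1 w hw.1⟩

end IsGeodesicRay

lemma GeodesicSpace.exists_segments (hgeo : GeodesicSpace X) (p : X) (x : ℕ → X) :
    ∃ σ : ℕ → ℝ → X, ∀ n, IsGeodesicSegment (σ n) 0 (dist p (x n)) p (x n) :=
  ⟨fun n => (hgeo p (x n)).choose, fun n => (hgeo p (x n)).choose_spec⟩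

end Geodesics

section IsometricActions

variable {X : Type*} [MetricSpace X] {G : Type*} [Group G] [MulAction G X]

lemma IsometricAction.dist_smul (hiso : IsometricAction G X) (g : G) (x y : X) :
    dist (g • x) (g • y) = dist x y :=
  (hiso g).dist_eq x y

lemma IsometricAction.dist_inv_smul (hiso : IsometricAction G X) (g : G) (x y : X) :
    dist (g⁻¹ • x) y = dist x (g • y) := by
  rw [← hiso.dist_smul g, smul_inv_smul]

lemma IsGeodesicOn.smul (hiso : IsometricAction G X) (g : G) {γ : ℝ → X} {s : Set ℝ}
    (h : IsGeodesicOn γ s) : IsGeodesicOn (fun t => g • γ t) s := by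
  intro u hu v hv
  rw [hiso.dist_smul]
  exact h u hu v hv

lemma IsGeodesicSegment.smul (hiso : IsometricAction G X) (g : G) {γ : ℝ → X} {d : ℝ}
    {x y : X} (h : IsGeodesicSegment γ 0 d x y) :
    IsGeodesicSegment (fun t => g • γ t) 0 d (g • x) (g • y) :=
  ⟨h.1, congrArg (g • ·) h.2.1, congrArg (g • ·) h.2.2.1, h.2.2.2.smul hiso g⟩

namespace AsympRays

variable {γ γ' γ'' : ℝ → X}

lemma symm (h : AsympRays γ γ') : AsympRays γ' γ :=
  let ⟨C, hC⟩ := h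
  ⟨C, fun t ht => dist_comm (γ' t) (γ t) ▸ hC t ht⟩

lemma trans (h : AsympRays γ γ') (h' : AsympRays γ' γ'') : AsympRays γ γ'' := by
  obtain ⟨C, hC⟩ := h
  obtain ⟨C', hC'⟩ := h'
  exact ⟨C + C', fun t ht => (dist_triangle _ (γ' t) _).trans (add_le_add (hC t ht) (hC' t ht))⟩

lemma smul (hiso : IsometricAction G X) (g : G) (h : AsympRays γ γ') :
    AsympRays (fun t => g • γ t) (fun t => g • γ' t) :=
  let ⟨C, hC⟩ := h
  ⟨C, fun t ht => (hiso.dist_smul g _ _).trans_le (hC t ht)⟩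

lemma smul_of_mem_endStabilizer {hiso : IsometricAction G X} {g : G}
    (hg : g ∈ endStabilizer hiso γ')
    (h : AsympRays γ γ') : AsympRays (fun t => g • γ t) γ :=
  ((h.smul hiso g).trans hg).trans h.symm

end AsympRays

lemma exists_dist_smul_le_of_mem_endStabilizer {hiso : IsometricAction G X}
    {L γ₁ γ₂ : ℝ → X} {g : G} (h₁ : AsympRays (fun t => L (-t)) γ₁) (h₂ : AsympRays L γ₂)
    (hg₁ : g ∈ endStabilizer hiso γ₁) (hg₂ : g ∈ endStabilizer hiso γ₂) :
    ∃ B, ∀ t, dist (g • L t) (L t) ≤ B := by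
  obtain ⟨B₁, hB₁⟩ := h₁.smul_of_mem_endStabilizer hg₁
  obtain ⟨B₂, hB₂⟩ := h₂.smul_of_mem_endStabilizer hg₂
  refine ⟨max B₁ B₂, fun t => ?_⟩
  rcases le_total 0 t with ht | ht
  · exact (hB₂ t ht).trans (le_max_right _ _)
  · simpa using (hB₁ (-t) (neg_nonneg.2 ht)).trans (le_max_left _ _)

end IsometricActions

section RealSequences

lemma le_at_dyadics_of_midpoint_convex {g : ℝ → ℝ} {M : ℝ} (h0 : g 0 ≤ M) (h1 : g 1 ≤ M)
    (hmid : ∀ s₁ ∈ Icc (0:ℝ) 1, ∀ s₂ ∈ Icc (0:ℝ) 1, g ((s₁ + s₂) / 2) ≤ (g s₁ + g s₂) / 2)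
    (m k : ℕ) (hk : k ≤ 2 ^ m) : g (k / 2 ^ m) ≤ M := by
  induction m generalizing k with
  | zero =>
    interval_cases k
    · simpa using h0
    · simpa using h1
  | succ m ih =>
    rcases Nat.even_or_odd' k with ⟨j, rfl | rfl⟩
    · have e : ((2 * j : ℕ) : ℝ) / 2 ^ (m + 1) = j / 2 ^ m := by
        push_cast; rw [pow_succ]; field_simp
      rw [e]
      exact ih j (by omega)
    · have hj : j + 1 ≤ 2 ^ m := by omega
      have e : ((2 * j + 1 : ℕ) : ℝ) / 2 ^ (m + 1) =
          (j / 2 ^ m + ((j + 1 : ℕ) : ℝ) / 2 ^ m) / 2 := by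
        push_cast; rw [pow_succ]; field_simp; ring
      have mem : ∀ i : ℕ, i ≤ 2 ^ m → (i : ℝ) / 2 ^ m ∈ Icc (0:ℝ) 1 := fun i hi =>
        ⟨by positivity, (div_le_one (by positivity)).2 (by exact_mod_cast hi)⟩
      rw [e]
      linarith [hmid _ (mem j (by omega)) _ (mem (j + 1) hj), ih j (by omega), ih (j + 1) hj]

lemma le_of_midpoint_convex_of_lipschitz {g : ℝ → ℝ} {M Λ : ℝ} (h0 : g 0 ≤ M) (h1 : g 1 ≤ M)
    (hmid : ∀ s₁ ∈ Icc (0:ℝ) 1, ∀ s₂ ∈ Icc (0:ℝ) 1, g ((s₁ + s₂) / 2) ≤ (g s₁ + g s₂) / 2)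
    (hlip : ∀ s₁ ∈ Icc (0:ℝ) 1, ∀ s₂ ∈ Icc (0:ℝ) 1, |g s₁ - g s₂| ≤ Λ * |s₁ - s₂|) :
    ∀ s ∈ Icc (0:ℝ) 1, g s ≤ M := by
  intro s hs
  by_contra! hlt
  obtain ⟨m, hm⟩ := pow_unbounded_of_one_lt (Λ / (g s - M)) (one_lt_two (α := ℝ))
  have h2m : (0:ℝ) < 2 ^ m := by positivity
  set k := ⌊s * 2 ^ m⌋₊
  have hk₁ : (k : ℝ) ≤ s * 2 ^ m := Nat.floor_le (by nlinarith [hs.1])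
  have hk₂ : s * 2 ^ m < k + 1 := Nat.lt_floor_add_one _
  have hk : k ≤ 2 ^ m := by
    have : (k : ℝ) ≤ 2 ^ m := hk₁.trans (by nlinarith [hs.2])
    exact_mod_cast this
  have hkmem : (k : ℝ) / 2 ^ m ∈ Icc (0:ℝ) 1 :=
    ⟨by positivity, (div_le_one h2m).2 (by exact_mod_cast hk)⟩
  have hclose : |s - k / 2 ^ m| ≤ 1 / 2 ^ m := by
    rw [show s - k / 2 ^ m = (s * 2 ^ m - k) / 2 ^ m by field_simp, abs_div, abs_of_pos h2m,
      abs_of_nonneg (by linarith)]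
    exact div_le_div_of_nonneg_right (by linarith) h2m.le
  have hΛ : 0 ≤ Λ := by
    have := hlip 0 ⟨le_rfl, zero_le_one⟩ 1 ⟨zero_le_one, le_rfl⟩
    norm_num at this
    exact (abs_nonneg _).trans this
  have hgap : g s - g (k / 2 ^ m) ≤ Λ / 2 ^ m := by
    calc g s - g (k / 2 ^ m) ≤ Λ * |s - k / 2 ^ m| := (le_abs_self _).trans (hlip s hs _ hkmem)
      _ ≤ Λ * (1 / 2 ^ m) := mul_le_mul_of_nonneg_left hclose hΛ
      _ = Λ / 2 ^ m := by ring
  have hsmall : Λ / 2 ^ m < g s - M := by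
    rw [div_lt_iff₀ (by linarith)] at hm
    rw [div_lt_iff₀ h2m]
    linarith
  linarith [le_at_dyadics_of_midpoint_convex h0 h1 hmid m k hk]

lemma antitone_of_midpoint_convex_of_bddAbove {φ : ℝ → ℝ} {M : ℝ} (hM : ∀ t, φ t ≤ M)
    (hmid : ∀ t s, φ t ≤ (φ (t - s) + φ (t + s)) / 2) : Antitone φ := by
  intro a b hab
  by_contra! hlt
  set s := b - a
  set ε := φ b - φ a
  have hε : 0 < ε := by linarith
  have hgrow : ∀ m : ℕ,
      ε ≤ φ (b + m * s) - φ (b + m * s - s) ∧ φ b + m * ε ≤ φ (b + m * s) := by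
    intro m
    induction m with
    | zero => simp [s, ε]
    | succ m ih =>
      have hm := hmid (b + m * s) s
      have e₁ : b + ((m + 1 : ℕ) : ℝ) * s - s = b + m * s := by push_cast; ring
      have e₂ : b + ((m + 1 : ℕ) : ℝ) * s = b + m * s + s := by push_cast; ring
      rw [e₁, e₂]
      push_cast
      constructor <;> linarith [ih.1, ih.2]
  obtain ⟨m, hm⟩ := exists_nat_gt ((M - φ b) / ε)
  rw [div_lt_iff₀ hε] at hm
  linarith [(hgrow m).2, hM (b + m * s)]

lemma eq_of_midpoint_convex_of_bddAbove {φ : ℝ → ℝ} {M : ℝ} (hM : ∀ t, φ t ≤ M)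
    (hmid : ∀ t s, φ t ≤ (φ (t - s) + φ (t + s)) / 2) (s t : ℝ) : φ s = φ t := by
  have hanti := antitone_of_midpoint_convex_of_bddAbove hM hmid
  have hmono : Antitone fun t => φ (-t) := antitone_of_midpoint_convex_of_bddAbove
    (fun t => hM (-t)) fun t s => by
      have := hmid (-t) s
      rw [neg_sub, neg_add', ← neg_add_eq_sub, add_comm]
      linarith
  rcases le_total s t with h | h
  · exact le_antisymm (by simpa using hmono (neg_le_neg h)) (hanti h)
  · exact le_antisymm (hanti h) (by simpa using hmono (neg_le_neg h))

lemma tendsto_atTop_or_atBot_of_escape {f : ℕ → ℝ} {S a c : ℝ} (ha : 0 < a)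
    (hstep : ∀ n, |f (n + 1) - f n| ≤ S) (hesc : ∀ n : ℕ, a⁻¹ * n - c ≤ |f n - f 0|) :
    Tendsto f atTop atTop ∨ Tendsto f atTop atBot := by
  have habs : Tendsto (fun n => |f n|) atTop atTop := by
    refine tendsto_atTop_mono (fun n => ?_) (tendsto_atTop_add_const_right _ (-(c + |f 0|))
      ((tendsto_natCast_atTop_atTop (R := ℝ)).const_mul_atTop (inv_pos.2 ha)))
    linarith [hesc n, abs_sub (f n) (f 0)]
  obtain ⟨N, hN⟩ := eventually_atTop.1 (habs.eventually_gt_atTop S)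
  -- once `|f n| > S`, a step of size at most `S` cannot cross `0`
  have hkeep : ∀ f : ℕ → ℝ, (∀ n, |f (n + 1) - f n| ≤ S) → (∀ n ≥ N, S < |f n|) →
      0 < f N → ∀ n ≥ N, 0 < f n := by
    intro f hstep hbig hpos n hn
    induction n, hn using Nat.le_induction with
    | base => exact hpos
    | succ n hn ih =>
      have := hbig n hn
      rw [abs_of_pos ih] at this
      linarith [neg_abs_le (f (n + 1) - f n), hstep n]
  have hne : f N ≠ 0 := by
    intro h
    have := hN N le_rfl
    rw [h, abs_zero] at this
    linarith [abs_nonneg (f 1 - f 0), hstep 0]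
  rcases hne.lt_or_gt with hneg | hpos
  · right
    have h := hkeep (fun n => -f n) (fun n => by rw [neg_sub_neg, abs_sub_comm]; exact hstep n)
      (fun n hn => by simpa using hN n hn) (by linarith)
    refine (tendsto_neg_atTop_atBot.comp habs).congr' (eventually_atTop.2 ⟨N, fun n hn => ?_⟩)
    simp [abs_of_neg (neg_pos.1 (h n hn))]
  · left
    exact habs.congr' (eventually_atTop.2
      ⟨N, fun n hn => abs_of_pos (hkeep f hstep hN hpos n hn)⟩)

lemma exists_abs_sub_le_of_bounded_steps {f : ℕ → ℝ} {S y : ℝ}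
    (hstep : ∀ n, |f (n + 1) - f n| ≤ S) (h0 : f 0 ≤ y) (hf : Tendsto f atTop atTop) :
    ∃ m, |f m - y| ≤ S := by
  classical
  have hS : 0 ≤ S := (abs_nonneg _).trans (hstep 0)
  have hex : ∃ m, y ≤ f m := (hf.eventually_ge_atTop y).exists
  obtain ⟨m, hm, hmin⟩ : ∃ m, y ≤ f m ∧ ∀ j < m, f j < y :=
    ⟨Nat.find hex, Nat.find_spec hex, fun j hj => lt_of_not_ge (Nat.find_min hex hj)⟩
  refine ⟨m, ?_⟩
  cases m with
  | zero => rw [abs_of_nonpos (by linarith)]; linarith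
  | succ j =>
    rw [abs_of_nonneg (by linarith)]
    linarith [hmin j j.lt_succ_self, (le_abs_self _).trans (hstep j)]

/-- A coarsely bi-Lipschitz map `ℤ → ℝ` goes to `+∞` at one end of `ℤ`: if both ends went to
`-∞`, the forward values would pass within `S` of a far backward value, contradicting `hsep`. -/
lemma tendsto_atTop_or_tendsto_comp_neg_atTop {w : ℤ → ℝ} {S a c : ℝ} (ha : 0 < a)
    (hstep : ∀ n, |w (n + 1) - w n| ≤ S)
    (hsep : ∀ m n : ℤ, a⁻¹ * |(m : ℝ) - n| - c ≤ |w m - w n|) :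
    Tendsto (fun n : ℕ => w n) atTop atTop ∨ Tendsto (fun n : ℕ => w (-n)) atTop atTop := by
  have hfwd := tendsto_atTop_or_atBot_of_escape (f := fun n : ℕ => w n) ha
    (fun n => by simpa using hstep n) (fun n => by simpa using hsep n 0)
  have hbwd := tendsto_atTop_or_atBot_of_escape (f := fun n : ℕ => w (-n)) ha
    (fun n => by
      rw [abs_sub_comm, Nat.cast_succ, neg_add, ← sub_eq_add_neg]
      simpa using hstep (-n - 1))
    (fun n => by simpa using hsep (-n) 0)
  rcases hfwd with hfwd | hfwd
  · exact .inl hfwd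
  rcases hbwd with hbwd | hbwd
  · exact .inr hbwd
  exfalso
  have hlin := (tendsto_natCast_atTop_atTop (R := ℝ)).const_mul_atTop (inv_pos.2 ha)
  obtain ⟨n, hn₀, hn⟩ :=
    ((hbwd.eventually_le_atBot (w 0)).and (hlin.eventually_gt_atTop (S + c))).exists
  obtain ⟨m, hm⟩ := exists_abs_sub_le_of_bounded_steps (f := fun m : ℕ => -w m) (y := -w (-n))
    (fun m => by rw [neg_sub_neg, abs_sub_comm]; exact_mod_cast hstep m) (by simpa using hn₀)
    (tendsto_neg_atBot_atTop.comp hfwd)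
  have hsep' := hsep m (-n)
  push_cast at hsep'
  rw [sub_neg_eq_add, abs_of_nonneg (by positivity), abs_sub_comm] at hsep'
  have : a⁻¹ * n ≤ a⁻¹ * (m + n) :=
    mul_le_mul_of_nonneg_left (by linarith [(Nat.cast_nonneg m : (0:ℝ) ≤ m)]) (by positivity)
  rw [neg_sub_neg] at hm
  linarith

end RealSequences

section Midpoints

variable {X : Type*} [MetricSpace X]

def IsMidpoint (x y m : X) : Prop := dist x m = dist x y / 2 ∧ dist y m = dist x y / 2

lemma IsMidpoint.symm {x y m : X} (h : IsMidpoint x y m) : IsMidpoint y x m :=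
  ⟨by rw [h.2, dist_comm], by rw [h.1, dist_comm]⟩

lemma GeodesicSpace.exists_isMidpoint (hgeo : GeodesicSpace X) (x y : X) :
    ∃ m, IsMidpoint x y m := by
  obtain ⟨γ, hγ⟩ := hgeo x y
  have hmem : dist x y / 2 ∈ Icc 0 (dist x y) :=
    ⟨by positivity, by linarith [dist_nonneg (x := x) (y := y)]⟩
  exact ⟨γ (dist x y / 2), hγ.dist_source hmem, by rw [dist_comm, hγ.dist_target hmem]; ring⟩

lemma IsGeodesicOn.isMidpoint {γ : ℝ → X} {s : Set ℝ} (h : IsGeodesicOn γ s) {u v : ℝ}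
    (hu : u ∈ s) (hv : v ∈ s) (hm : (u + v) / 2 ∈ s) :
    IsMidpoint (γ u) (γ v) (γ ((u + v) / 2)) := by
  rw [IsMidpoint, h u hu _ hm, h v hv _ hm, h u hu v hv,
    show u - (u + v) / 2 = (u - v) / 2 by ring, show v - (u + v) / 2 = -((u - v) / 2) by ring,
    abs_neg, abs_div, abs_two]
  exact ⟨rfl, rfl⟩

lemma CAT0.dist_isMidpoint_le (hcat : CAT0 X) {x y y' m m' : X}
    (hm : IsMidpoint x y m) (hm' : IsMidpoint x y' m') : dist m m' ≤ dist y y' / 2 := by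
  have h₁ := hcat.2 y' x y m hm.1 hm.2
  have h₂ := hcat.2 m x y' m' hm'.1 hm'.2
  rw [dist_comm y' m, dist_comm y' x, dist_comm y' y] at h₁
  rw [dist_comm m x, hm.1] at h₂
  have : dist m m' ^ 2 ≤ (dist y y' / 2) ^ 2 := by nlinarith
  nlinarith [dist_nonneg (x := m) (y := m'), dist_nonneg (x := y) (y := y')]

lemma CAT0.dist_isMidpoint_isMidpoint_le (hcat : CAT0 X) {x y x' y' m m' : X}
    (hm : IsMidpoint x y m) (hm' : IsMidpoint x' y' m') :
    dist m m' ≤ (dist x x' + dist y y') / 2 := by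
  obtain ⟨n, hn⟩ := hcat.1.exists_isMidpoint x' y
  have h₁ := hcat.dist_isMidpoint_le hm.symm hn.symm
  have h₂ := hcat.dist_isMidpoint_le hn hm'
  linarith [dist_triangle m n m']

/-- The distance is a bounded midpoint-convex function of `t`. -/
lemma CAT0.dist_apply_eq_of_bounded (hcat : CAT0 X) {L L' : ℝ → X} (hL : IsGeodesicLine L)
    (hL' : IsGeodesicLine L') {B : ℝ} (hB : ∀ t, dist (L t) (L' t) ≤ B) (s t : ℝ) :
    dist (L s) (L' s) = dist (L t) (L' t) := by
  refine eq_of_midpoint_convex_of_bddAbove (φ := fun t => dist (L t) (L' t)) hB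
    (fun t s => ?_) s t
  have key := hcat.dist_isMidpoint_isMidpoint_le
    (hL.isMidpoint (u := t - s) (v := t + s) trivial trivial trivial)
    (hL'.isMidpoint (u := t - s) (v := t + s) trivial trivial trivial)
  rwa [show (t - s + (t + s)) / 2 = t by ring] at key

end Midpoints

section FellowTravelling

variable {X : Type*} [MetricSpace X]

/-- The one consequence of nonpositive curvature that the arguments about boundary points use. -/
def SegmentsFellowTravel (X : Type*) [MetricSpace X] (K : ℝ) : Prop :=
  ∀ (p q p' q' : X) (σ σ' : ℝ → X), IsGeodesicSegment σ 0 (dist p q) p q →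
    IsGeodesicSegment σ' 0 (dist p' q') p' q' →
    ∀ t, 0 ≤ t → t ≤ dist p q → t ≤ dist p' q' →
      dist (σ t) (σ' t) ≤ 4 * dist p p' + 4 * dist q q' + K

lemma CAT0.dist_segments_le_max (hcat : CAT0 X) {p q p' q' : X} {σ σ' : ℝ → X}
    (hσ : IsGeodesicSegment σ 0 (dist p q) p q)
    (hσ' : IsGeodesicSegment σ' 0 (dist p' q') p' q') {s : ℝ} (hs : s ∈ Icc (0:ℝ) 1) :
    dist (σ (s * dist p q)) (σ' (s * dist p' q')) ≤ max (dist p p') (dist q q') := by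
  set d := dist p q
  set d' := dist p' q'
  have hmem : ∀ {e : ℝ}, 0 ≤ e → ∀ s ∈ Icc (0:ℝ) 1, s * e ∈ Icc 0 e := fun he s hs =>
    ⟨mul_nonneg hs.1 he, mul_le_of_le_one_left he hs.2⟩
  refine le_of_midpoint_convex_of_lipschitz (g := fun s => dist (σ (s * d)) (σ' (s * d')))
    (Λ := d + d') ?_ ?_ (fun s₁ hs₁ s₂ hs₂ => ?_) (fun s₁ hs₁ s₂ hs₂ => ?_) s hs
  · simp [hσ.2.1, hσ'.2.1]
  · simp [hσ.2.2.1, hσ'.2.2.1]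
  · have hmid : ∀ {e : ℝ} {τ : ℝ → X} {a b : X}, IsGeodesicSegment τ 0 e a b →
        IsMidpoint (τ (s₁ * e)) (τ (s₂ * e)) (τ ((s₁ + s₂) / 2 * e)) := by
      intro e τ a b hτ
      have hc : (s₁ * e + s₂ * e) / 2 = (s₁ + s₂) / 2 * e := by ring
      have := hτ.2.2.2.isMidpoint (hmem hτ.1 s₁ hs₁) (hmem hτ.1 s₂ hs₂)
        (hc ▸ hmem hτ.1 _ ⟨by linarith [hs₁.1, hs₂.1], by linarith [hs₁.2, hs₂.2]⟩)
      rwa [hc] at this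
    exact hcat.dist_isMidpoint_isMidpoint_le (hmid hσ) (hmid hσ')
  · have hlen : ∀ {e : ℝ} {τ : ℝ → X} {a b : X}, IsGeodesicSegment τ 0 e a b →
        dist (τ (s₁ * e)) (τ (s₂ * e)) = |s₁ - s₂| * e := fun hτ => by
      rw [hτ.dist_apply (hmem hτ.1 s₁ hs₁) (hmem hτ.1 s₂ hs₂), ← sub_mul, abs_mul,
        abs_of_nonneg hτ.1]
    have := abs_dist_sub_dist_le (σ (s₁ * d)) (σ' (s₁ * d')) (σ (s₂ * d)) (σ' (s₂ * d'))
    rw [hlen hσ, hlen hσ'] at this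
    linarith

lemma CAT0.segmentsFellowTravel (hcat : CAT0 X) : SegmentsFellowTravel X 0 := by
  intro p q p' q' σ σ' hσ hσ' t ht₀ ht ht'
  set d := dist p q
  set d' := dist p' q'
  rcases (ht₀.trans ht).eq_or_lt with hd | hd
  · obtain rfl : t = 0 := le_antisymm (hd ▸ ht) ht₀
    rw [hσ.2.1, hσ'.2.1]
    linarith [dist_nonneg (x := p) (y := p'), dist_nonneg (x := q) (y := q')]
  have hs : t / d ∈ Icc (0:ℝ) 1 := ⟨by positivity, (div_le_one hd).2 ht⟩
  have hmax := hcat.dist_segments_le_max hσ hσ' hs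
  rw [div_mul_cancel₀ t hd.ne'] at hmax
  -- the proportional time `t / d * d'` on `σ'` is at most `|d' - d|` away from `t`
  have hshift : dist (σ' (t / d * d')) (σ' t) ≤ dist p p' + dist q q' := by
    rw [hσ'.dist_apply ⟨mul_nonneg hs.1 hσ'.1, mul_le_of_le_one_left hσ'.1 hs.2⟩ ⟨ht₀, ht'⟩,
      show t / d * d' - t = t / d * (d' - d) by field_simp, abs_mul, abs_of_nonneg hs.1]
    calc t / d * |d' - d| ≤ |d' - d| := mul_le_of_le_one_left (abs_nonneg _) hs.2
      _ ≤ dist p' p + dist q' q := abs_dist_sub_dist_le p' q' p q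
      _ = dist p p' + dist q q' := by rw [dist_comm p', dist_comm q']
  have := max_le_add_of_nonneg (dist_nonneg (x := p) (y := p')) (dist_nonneg (x := q) (y := q'))
  linarith [dist_triangle (σ t) (σ' (t / d * d')) (σ' t), dist_nonneg (x := p) (y := p'),
    dist_nonneg (x := q) (y := q')]

end FellowTravelling

section SlimTriangles

variable {X : Type*} [MetricSpace X] {δ : ℝ}

lemma SlimTriangles.segmentsFellowTravel (hgeo : GeodesicSpace X) (hδ : 0 ≤ δ)
    (hslim : SlimTriangles X δ) : SegmentsFellowTravel X (8 * δ) := by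
  intro p q p' q' σ σ' hσ hσ' t ht₀ ht ht'
  obtain ⟨τ, hτ⟩ := hgeo q q'
  obtain ⟨η, hη⟩ := hgeo q' p
  obtain ⟨θ, hθ⟩ := hgeo p p'
  have hlen := abs_dist_sub_dist_le p q p' q'
  have hσt := hσ.dist_source ⟨ht₀, ht⟩
  have hσ't := hσ'.dist_source ⟨ht₀, ht'⟩
  have hσt' := hσ.dist_target ⟨ht₀, ht⟩
  have hσ't' := hσ'.dist_target ⟨ht₀, ht'⟩
  have hpp' := dist_nonneg (x := p) (y := p')
  have hqq' := dist_nonneg (x := q) (y := q')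
  -- `σ t` is `δ`-close to the side `[q, q']` or to the diagonal `[q', p]`
  obtain ⟨P, ⟨u, hu, rfl⟩ | ⟨v, hv, rfl⟩, hP⟩ := hslim p q q' σ τ η hσ hτ hη t ⟨ht₀, ht⟩
  · have h₁ := hτ.dist_source hu
    calc dist (σ t) (σ' t) ≤ dist (σ t) q + dist q q' + dist q' (σ' t) :=
          dist_triangle4 _ _ _ _
      _ ≤ 4 * dist p p' + 4 * dist q q' + 8 * δ := by
        rw [dist_comm q' (σ' t), hσt', hσ't']
        linarith [dist_triangle (σ t) (τ u) q, dist_comm (τ u) q, hu.2, abs_le.1 hlen]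
  -- in the latter case, the diagonal point is `δ`-close to `[p, p']` or to `σ'`
  obtain ⟨Q, ⟨w, hw, rfl⟩ | ⟨u, hu, rfl⟩, hQ⟩ := hslim q' p p' η θ σ' hη hθ hσ' v hv
  · have h₁ := hθ.dist_source hw
    calc dist (σ t) (σ' t) ≤ dist (σ t) p + dist p p' + dist p' (σ' t) :=
          dist_triangle4 _ _ _ _
      _ ≤ 4 * dist p p' + 4 * dist q q' + 8 * δ := by
        rw [dist_comm (σ t) p, hσt, hσ't]
        linarith [dist_triangle4 p (θ w) (η v) (σ t), dist_comm (θ w) (η v),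
          dist_comm (η v) (σ t), hw.2]
  · have h₁ := hσ'.dist_source hu
    have h₂ : dist (σ t) (σ' u) ≤ 2 * δ := by linarith [dist_triangle (σ t) (η v) (σ' u)]
    have h₃ := abs_dist_sub_dist_le p' (σ' u) p (σ t)
    rw [h₁, hσt, dist_comm p' p, dist_comm (σ' u)] at h₃
    have h₄ := hσ'.dist_apply hu ⟨ht₀, ht'⟩
    linarith [dist_triangle (σ t) (σ' u) (σ' t), abs_le.1 h₃]

lemma SlimTriangles.exists_dist_third_side_le (hslim : SlimTriangles X δ) {x y z : X}
    {γ₁ γ₂ γ₃ : ℝ → X} (h₁ : IsGeodesicSegment γ₁ 0 (dist x y) x y)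
    (h₂ : IsGeodesicSegment γ₂ 0 (dist y z) y z) (h₃ : IsGeodesicSegment γ₃ 0 (dist z x) z x)
    {s : ℝ} (hs : s ∈ Icc 0 (dist x y)) (hfar : δ + dist y z < dist (γ₁ s) y) :
    ∃ v ∈ Icc 0 (dist z x), dist (γ₁ s) (γ₃ v) ≤ δ := by
  obtain ⟨P, ⟨u, hu, rfl⟩ | ⟨v, hv, rfl⟩, hP⟩ := hslim x y z γ₁ γ₂ γ₃ h₁ h₂ h₃ s hs
  · have := h₂.dist_source hu
    linarith [dist_triangle (γ₁ s) (γ₂ u) y, dist_comm (γ₂ u) y, hu.2]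
  · exact ⟨v, hv, hP⟩

/-- Cut the quadrilateral `L' (-T), L' T, L T, L (-T)` along a diagonal: for `T` large,
`L' t₀` is far from both short sides, so slimness applied twice puts it near `L`. -/
lemma SlimTriangles.exists_dist_line_le (hgeo : GeodesicSpace X) (hδ : 0 ≤ δ)
    (hslim : SlimTriangles X δ) {L L' : ℝ → X} (hL : IsGeodesicLine L) (hL' : IsGeodesicLine L')
    {B : ℝ} (hB : ∀ t, dist (L' t) (L t) ≤ B) (t₀ : ℝ) : ∃ u, dist (L' t₀) (L u) ≤ 2 * δ := by
  have hB₀ : 0 ≤ B := dist_nonneg.trans (hB 0)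
  set T := |t₀| + B + 2 * δ + 1
  have hT : |t₀| < T - B - 2 * δ := by linarith
  have ht₀ := abs_lt.1 (show |t₀| < T by linarith)
  obtain ⟨γyz, hyz⟩ := hgeo (L' T) (L T)
  obtain ⟨γzx, hzx⟩ := hgeo (L T) (L' (-T))
  obtain ⟨γxw, hxw⟩ := hgeo (L' (-T)) (L (-T))
  have hxy := hL'.isGeodesicSegment (show -T ≤ T by linarith)
  have hwz := hL.isGeodesicSegment (show -T ≤ T by linarith)
  have hs : t₀ + T ∈ Icc 0 (dist (L' (-T)) (L' T)) := by
    rw [hL'.dist_apply, abs_of_nonpos (by linarith)]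
    constructor <;> linarith
  have e : t₀ + T + -T = t₀ := by ring
  obtain ⟨v, hv, hPv⟩ := hslim.exists_dist_third_side_le hxy hyz hzx hs (by
    simp only [e]
    rw [hL'.dist_apply, abs_of_nonpos (by linarith)]
    linarith [hB T, abs_lt.1 hT])
  simp only [e] at hPv
  obtain ⟨u, -, hQu⟩ := hslim.exists_dist_third_side_le hzx hxw hwz hv (by
    have h := dist_triangle (L' t₀) (γzx v) (L' (-T))
    rw [hL'.dist_apply, abs_of_nonneg (by linarith)] at h
    linarith [hB (-T), abs_lt.1 hT])
  exact ⟨u + -T, by linarith [dist_triangle (L' t₀) (γzx v) (L (u + -T))]⟩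

end SlimTriangles

lemma NPCSpace.exists_segmentsFellowTravel {X : Type*} [MetricSpace X] (hNPC : NPCSpace X) :
    ∃ K, SegmentsFellowTravel X K := by
  rcases hNPC.2 with ⟨-, hcat⟩ | ⟨-, δ, hδ, hslim⟩
  · exact ⟨0, hcat.segmentsFellowTravel⟩
  · exact ⟨8 * δ, hslim.segmentsFellowTravel hNPC.1 hδ⟩

section ConvergenceToEnds

variable {X : Type*} [MetricSpace X] {K : ℝ} {x y : ℕ → X} {γ γ' : ℝ → X}

lemma tendsto_dist_atTop_of_le {p p' : X} {C : ℝ}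
    (h : Tendsto (fun n => dist p (x n)) atTop atTop)
    (hC : ∀ n, dist p (x n) ≤ dist p' (y n) + C) :
    Tendsto (fun n => dist p' (y n)) atTop atTop :=
  tendsto_atTop_mono (fun n => by linarith [hC n]) (tendsto_atTop_add_const_right _ (-C) h)

namespace ConvergesToEnd

lemma of_dist_le_ray (hft : SegmentsFellowTravel X K) (hray : IsGeodesicRay γ) {t : ℕ → ℝ}
    {E : ℝ} (ht : Tendsto t atTop atTop) (hE : ∀ᶠ n in atTop, dist (x n) (γ (t n)) ≤ E) :
    ConvergesToEnd x γ := by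
  have hdist : Tendsto (fun n => dist (γ 0) (x n)) atTop atTop := by
    refine tendsto_atTop_mono' _ ?_ (tendsto_atTop_add_const_right _ (-E) ht)
    filter_upwards [hE, ht.eventually_ge_atTop 0] with n hn ht₀
    linarith [hray.dist_zero_apply ht₀, dist_triangle (γ 0) (x n) (γ (t n))]
  refine ⟨hdist, 4 * E + K, fun s hs σ hσ => ?_⟩
  filter_upwards [hE, ht.eventually_ge_atTop s, hdist.eventually_ge_atTop s] with n hn hst hsx
  have := hft _ _ _ _ (σ n) γ (hσ n) (hray.isGeodesicSegment (hs.trans hst)) s hs hsx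
    (by rwa [hray.dist_zero_apply (hs.trans hst)])
  rw [dist_self] at this
  linarith

lemma asympRays (hgeo : GeodesicSpace X) (hft : SegmentsFellowTravel X K)
    (h : ConvergesToEnd x γ) (h' : ConvergesToEnd x γ') : AsympRays γ γ' := by
  obtain ⟨hx, C, hC⟩ := h
  obtain ⟨hx', C', hC'⟩ := h'
  obtain ⟨σ, hσ⟩ := hgeo.exists_segments (γ 0) x
  obtain ⟨σ', hσ'⟩ := hgeo.exists_segments (γ' 0) x
  refine ⟨C + C' + (4 * dist (γ 0) (γ' 0) + K), fun s hs => ?_⟩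
  obtain ⟨n, h₁, h₂, h₃, h₄⟩ := ((hC s hs σ hσ).and <| (hC' s hs σ' hσ').and <|
    (hx.eventually_ge_atTop s).and (hx'.eventually_ge_atTop s)).exists
  have := hft _ _ _ _ (σ n) (σ' n) (hσ n) (hσ' n) s hs h₃ h₄
  rw [dist_self] at this
  linarith [dist_triangle4 (γ s) (σ n s) (σ' n s) (γ' s), dist_comm (γ s) (σ n s)]

lemma trans_asympRays (hgeo : GeodesicSpace X) (hft : SegmentsFellowTravel X K)
    (h : ConvergesToEnd x γ) (hasy : AsympRays γ γ') : ConvergesToEnd x γ' := by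
  obtain ⟨hx, C, hC⟩ := h
  obtain ⟨A, hA⟩ := hasy
  obtain ⟨τ, hτ⟩ := hgeo.exists_segments (γ 0) x
  have hdist : Tendsto (fun n => dist (γ' 0) (x n)) atTop atTop := by
    refine tendsto_dist_atTop_of_le (C := A) hx fun n => ?_
    linarith [dist_triangle (γ 0) (γ' 0) (x n), hA 0 le_rfl]
  refine ⟨hdist, C + 4 * A + K + A, fun s hs σ hσ => ?_⟩
  filter_upwards [hC s hs τ hτ, hx.eventually_ge_atTop s, hdist.eventually_ge_atTop s]
    with n h₁ h₂ h₃
  have := hft _ _ _ _ (σ n) (τ n) (hσ n) (hτ n) s hs h₃ h₂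
  rw [dist_self] at this
  linarith [dist_triangle4 (σ n s) (τ n s) (γ s) (γ' s), dist_comm (γ' 0) (γ 0), hA 0 le_rfl,
    hA s hs]

lemma of_dist_le (hgeo : GeodesicSpace X) (hft : SegmentsFellowTravel X K)
    (h : ConvergesToEnd x γ) {R : ℝ} (hR : ∀ n, dist (x n) (y n) ≤ R) : ConvergesToEnd y γ := by
  obtain ⟨hx, C, hC⟩ := h
  obtain ⟨τ, hτ⟩ := hgeo.exists_segments (γ 0) x
  have hdist : Tendsto (fun n => dist (γ 0) (y n)) atTop atTop := by
    refine tendsto_dist_atTop_of_le (C := R) hx fun n => ?_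
    linarith [dist_triangle (γ 0) (y n) (x n), dist_comm (y n) (x n), hR n]
  refine ⟨hdist, 4 * R + K + C, fun s hs σ hσ => ?_⟩
  filter_upwards [hC s hs τ hτ, hx.eventually_ge_atTop s, hdist.eventually_ge_atTop s]
    with n h₁ h₂ h₃
  have := hft _ _ _ _ (σ n) (τ n) (hσ n) (hτ n) s hs h₃ h₂
  rw [dist_self, dist_comm (y n)] at this
  linarith [dist_triangle (σ n s) (τ n s) (γ s), hR n]

lemma smul {G : Type*} [Group G] [MulAction G X] (hiso : IsometricAction G X) (g : G)
    (h : ConvergesToEnd x γ) : ConvergesToEnd (fun n => g • x n) (fun t => g • γ t) := by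
  obtain ⟨hx, C, hC⟩ := h
  refine ⟨by simpa only [hiso.dist_smul] using hx, C, fun s hs σ hσ => ?_⟩
  have hσ' : ∀ n, IsGeodesicSegment (fun u => g⁻¹ • σ n u) 0 (dist (γ 0) (x n)) (γ 0) (x n) :=
    fun n => by simpa [hiso.dist_smul] using (hσ n).smul hiso g⁻¹
  filter_upwards [hC s hs _ hσ'] with n hn
  rwa [hiso.dist_inv_smul] at hn

end ConvergesToEnd

end ConvergenceToEnds

lemma pow_smul_eq_of_smul_eq {X M : Type*} [Monoid M] [MulAction M X] {g : M} {α : ℝ → X}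
    {k : ℝ} (htr : ∀ t, g • α t = α (t + k)) (n : ℕ) (t : ℝ) : g ^ n • α t = α (t + n * k) := by
  induction n generalizing t with
  | zero => simp
  | succ n ih => rw [pow_succ, mul_smul, htr, ih]; push_cast; ring_nf

section AttractingPoints

variable {X : Type*} [MetricSpace X] {G : Type*} [Group G] [MulAction G X] {K : ℝ} {g : G}
  {γ γ' : ℝ → X}

namespace AttractsTo

lemma conj (hiso : IsometricAction G X) (f : G) (h : AttractsTo g γ) :
    AttractsTo (f * g * f⁻¹) (fun t => f • γ t) :=
  ⟨h.1.smul hiso f, fun x => by simpa [conj_pow, mul_smul] using (h.2 (f⁻¹ • x)).smul hiso f⟩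

lemma asympRays (hgeo : GeodesicSpace X) (hft : SegmentsFellowTravel X K) (h : AttractsTo g γ)
    (h' : AttractsTo g γ') : AsympRays γ γ' :=
  (h.2 (γ 0)).asympRays hgeo hft (h'.2 (γ 0))

lemma trans_asympRays (hgeo : GeodesicSpace X) (hft : SegmentsFellowTravel X K)
    (h : AttractsTo g γ) (hasy : AsympRays γ γ') (hray : IsGeodesicRay γ') : AttractsTo g γ' :=
  ⟨hray, fun x => (h.2 x).trans_asympRays hgeo hft hasy⟩

lemma mem_endStabilizer (hgeo : GeodesicSpace X) (hft : SegmentsFellowTravel X K)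
    (hiso : IsometricAction G X) (h : AttractsTo g γ) : g ∈ endStabilizer hiso γ := by
  have := h.conj hiso g
  rw [mul_inv_cancel_right] at this
  exact this.asympRays hgeo hft h

lemma asympRays_axis (hgeo : GeodesicSpace X) (hft : SegmentsFellowTravel X K)
    (h : AttractsTo g γ) {α : ℝ → X} {k : ℝ} (hα : IsGeodesicLine α) (hk : 0 < k)
    (htr : ∀ t, g • α t = α (t + k)) : AsympRays γ α :=
  (h.2 (α 0)).asympRays hgeo hft <| .of_dist_le_ray hft hα.isGeodesicRay (E := 0)
    (tendsto_natCast_atTop_atTop.atTop_mul_const hk)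
    (.of_forall fun n => by simp [pow_smul_eq_of_smul_eq htr])

end AttractsTo

lemma IsHyperbolicIsom.conj (hiso : IsometricAction G X) (hg : IsHyperbolicIsom X g) (f : G) :
    IsHyperbolicIsom X (f * g * f⁻¹) := by
  rcases hg with ⟨hc, hcat, α, hα, k, hk, htr⟩ | ⟨hp, hδ, x, a, b, ha, hb, hab⟩
  · refine .inl ⟨hc, hcat, fun t => f • α t, hα.smul hiso f, k, hk, fun t => ?_⟩
    simp [mul_smul, htr]
  · refine .inr ⟨hp, hδ, f • x, a, b, ha, hb, fun m n => ?_⟩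
    simpa [conj_zpow, mul_smul, hiso.dist_smul] using hab m n

end AttractingPoints

section RepellingPoints

variable {X : Type*} [MetricSpace X] {G : Type*} [Group G] [MulAction G X] {K : ℝ} {h : G}
  {γ₁ γ₂ L : ℝ → X}

lemma CAT0.convergesToEnd_inv_pow_smul (hcat : CAT0 X) (hiso : IsometricAction G X)
    (hft : SegmentsFellowTravel X K) (hax : IsAxial X h) (hattr : AttractsTo h γ₁)
    (hL : IsGeodesicLine L) (h₁ : AsympRays (fun t => L (-t)) γ₁) (h₂ : AsympRays L γ₂)
    (hfix : h ∈ endStabilizer hiso γ₂) : ConvergesToEnd (fun n => (h⁻¹) ^ n • L 0) L := by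
  obtain ⟨α, hα, k, hk, htr⟩ := hax
  obtain ⟨A, hA⟩ := h₁.trans (hattr.asympRays_axis hcat.1 hft hα hk htr)
  -- the lines `hⁿ L` and `L (· - n k)` are `2A`-close towards `ξ₁` and at bounded distance
  -- towards `ξ₂`, hence at constant distance at most `2A`
  have hnear : ∀ n : ℕ, dist ((h⁻¹) ^ n • L 0) (L (n * k)) ≤ 2 * A := by
    intro n
    have hnk : 0 ≤ n * k := by positivity
    have hback : ∀ t ≤ 0, dist (h ^ n • L t) (L (t - n * k)) ≤ 2 * A := by
      intro t ht
      have h₁ : dist (L t) (α (-t)) ≤ A := by simpa using hA (-t) (by linarith)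
      have h₂ : dist (α (-t + n * k)) (L (t - n * k)) ≤ A := by
        rw [dist_comm]
        convert hA (-t + n * k) (by linarith) using 3
        ring
      have := dist_triangle (h ^ n • L t) (h ^ n • α (-t)) (L (t - n * k))
      rw [hiso.dist_smul, pow_smul_eq_of_smul_eq htr] at this
      linarith
    obtain ⟨B, hB⟩ := h₂.smul_of_mem_endStabilizer (pow_mem hfix n)
    have hbdd : ∀ t, dist (h ^ n • L t) (L (t - n * k)) ≤ max (2 * A) (B + n * k) := by
      intro t
      rcases le_total t 0 with ht | ht
      · exact (hback t ht).trans (le_max_left _ _)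
      · have := dist_triangle (h ^ n • L t) (L t) (L (t - n * k))
        rw [hL.dist_apply, sub_sub_cancel, abs_of_nonneg hnk] at this
        exact (this.trans (by linarith [hB t ht])).trans (le_max_right _ _)
    have hshift : IsGeodesicLine fun t => L (t - n * k) := fun u _ v _ => by
      rw [hL.dist_apply, sub_sub_sub_cancel_right]
    have := hcat.dist_apply_eq_of_bounded (hL.smul hiso (h ^ n)) hshift hbdd (n * k) 0
    rw [sub_self, zero_sub] at this
    rw [inv_pow, hiso.dist_inv_smul, dist_comm, this]
    simpa using hback 0 le_rfl
  exact .of_dist_le_ray hft hL.isGeodesicRay (tendsto_natCast_atTop_atTop.atTop_mul_const hk)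
    (.of_forall hnear)

lemma QIHyperbolic.exists_bounds (hiso : IsometricAction G X) (hqi : QIHyperbolic X h) (p : X) :
    ∃ a b : ℝ, 0 < a ∧ ∀ m n : ℤ, a⁻¹ * |(m : ℝ) - n| - b ≤ dist (h ^ m • p) (h ^ n • p) ∧
      dist (h ^ m • p) (h ^ n • p) ≤ a * |(m : ℝ) - n| + b := by
  obtain ⟨x, a, b, ha, -, hab⟩ := hqi
  refine ⟨a, b + 2 * dist p x, ha, fun m n => ?_⟩
  have hm := hiso.dist_smul (h ^ m) p x
  have hn := hiso.dist_smul (h ^ n) p x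
  have h₁ := dist_triangle4 (h ^ m • p) (h ^ m • x) (h ^ n • x) (h ^ n • p)
  have h₂ := dist_triangle4 (h ^ m • x) (h ^ m • p) (h ^ n • p) (h ^ n • x)
  rw [dist_comm (h ^ n • x) (h ^ n • p)] at h₁
  rw [dist_comm (h ^ m • x) (h ^ m • p)] at h₂
  constructor <;> linarith [hab m n]

/-- Every `hⁿ L`, `n ∈ ℤ`, is a line at bounded distance from `L`, so the orbit of `L 0` stays
`2δ`-close to `L` at coarsely bi-Lipschitz times `w n`. The forward orbit goes to the backward
end of `L`, so `w` goes to `+∞` along the backward orbit. -/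
lemma SlimTriangles.convergesToEnd_inv_pow_smul {δ : ℝ} (hgeo : GeodesicSpace X) (hδ : 0 ≤ δ)
    (hslim : SlimTriangles X δ) (hiso : IsometricAction G X) (hft : SegmentsFellowTravel X K)
    (hqi : QIHyperbolic X h) (hattr : AttractsTo h γ₁) (hL : IsGeodesicLine L)
    (h₁ : AsympRays (fun t => L (-t)) γ₁) (h₂ : AsympRays L γ₂)
    (hfix : h ∈ endStabilizer hiso γ₂) : ConvergesToEnd (fun n => (h⁻¹) ^ n • L 0) L := by
  obtain ⟨a, b, ha, hab⟩ := hqi.exists_bounds hiso (L 0)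
  have hfix₁ := hattr.mem_endStabilizer hgeo hft hiso
  have hnear : ∀ n : ℤ, ∃ u, dist (h ^ n • L 0) (L u) ≤ 2 * δ := fun n => by
    obtain ⟨B, hB⟩ := exists_dist_smul_le_of_mem_endStabilizer h₁ h₂ (zpow_mem hfix₁ n)
      (zpow_mem hfix n)
    exact hslim.exists_dist_line_le hgeo hδ hL (hL.smul hiso _) hB 0
  choose w hw using hnear
  have hcmp : ∀ m n : ℤ,
      |dist (h ^ m • L 0) (h ^ n • L 0) - dist (L (w m)) (L (w n))| ≤ 4 * δ := fun m n =>
    (abs_dist_sub_dist_le _ _ _ _).trans (by linarith [hw m, hw n])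
  have hstep : ∀ n : ℤ, |w (n + 1) - w n| ≤ a + b + 4 * δ := by
    intro n
    have := (hab (n + 1) n).2
    push_cast at this
    rw [add_sub_cancel_left, abs_one, mul_one] at this
    linarith [abs_le.1 (hcmp (n + 1) n), hL.dist_apply (w (n + 1)) (w n)]
  rcases tendsto_atTop_or_tendsto_comp_neg_atTop (c := b + 4 * δ) ha hstep
    (fun m n => by linarith [(hab m n).1, abs_le.1 (hcmp m n), hL.dist_apply (w m) (w n)])
    with hfwd | hbwd
  · have hconv : ConvergesToEnd (fun n : ℕ => h ^ n • L 0) L :=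
      .of_dist_le_ray hft hL.isGeodesicRay hfwd (.of_forall fun n => by simpa using hw n)
    exact (hL.not_asympRays_comp_neg ((hconv.asympRays hgeo hft (hattr.2 _)).trans h₁.symm)).elim
  · exact .of_dist_le_ray hft hL.isGeodesicRay hbwd
      (.of_forall fun n => by simpa [zpow_neg] using hw (-n))

theorem attractsTo_inv_of_mem_endStabilizer (hNPC : NPCSpace X) (hiso : IsometricAction G X)
    (hhyp : IsHyperbolicIsom X h) (hattr : AttractsTo h γ₁) (hray₂ : IsGeodesicRay γ₂)
    (hopp : OppositeEnds γ₁ γ₂) (hfix : h ∈ endStabilizer hiso γ₂) : AttractsTo h⁻¹ γ₂ := by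
  obtain ⟨K, hft⟩ := hNPC.exists_segmentsFellowTravel
  obtain ⟨L, hL, h₁, h₂⟩ := hopp
  have hconv : ConvergesToEnd (fun n => (h⁻¹) ^ n • L 0) L := by
    rcases hhyp with ⟨-, hcat, hax⟩ | ⟨-, ⟨δ, hδ, hslim⟩, hqi⟩
    · exact hcat.convergesToEnd_inv_pow_smul hiso hft hax hattr hL h₁ h₂ hfix
    · exact hslim.convergesToEnd_inv_pow_smul hNPC.1 hδ hiso hft hqi hattr hL h₁ h₂ hfix
  refine ⟨hray₂, fun x => ?_⟩
  exact (hconv.trans_asympRays hNPC.1 hft h₂).of_dist_le hNPC.1 hft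
    fun n => (hiso.dist_smul _ _ _).le

end RepellingPoints

/-- Let `g` be a hyperbolic isometry with attracting point `ξ₁` (the
boundary point of `γ₁`) and let `ξ₂` (the boundary point of `γ₂`) be opposite `ξ₁`.
Then `g` stabilizes `ξ₂` iff `ξ₂ = ξ₋(g)`. Consequently, every hyperbolic element of
`G` with attracting point `ξ₁` has repelling point `ξ₂` iff `G_{ξ₁} ≤ G_{ξ₂}`. -/
theorem fixed_opposite_point_iff_repelling
    {X G : Type*} [MetricSpace X] [Group G] [MulAction G X]
    (hNPC : NPCSpace X) (hiso : IsometricAction G X)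
    (g : G) (hhyp : IsHyperbolicIsom X g)
    (γ₁ γ₂ : ℝ → X) (hattr : AttractsTo g γ₁)
    (hray₂ : IsGeodesicRay γ₂) (hopp : OppositeEnds γ₁ γ₂) :
    (AsympRays (fun t => g • γ₂ t) γ₂ ↔ AttractsTo g⁻¹ γ₂) ∧
    ((∀ h : G, IsHyperbolicIsom X h → AttractsTo h γ₁ → AttractsTo h⁻¹ γ₂) ↔
      endStabilizer hiso γ₁ ≤ endStabilizer hiso γ₂) := by
  obtain ⟨K, hft⟩ := hNPC.exists_segmentsFellowTravel
  have hgeo := hNPC.1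
  refine ⟨⟨attractsTo_inv_of_mem_endStabilizer hNPC hiso hhyp hattr hray₂ hopp,
    fun hrep => inv_mem_iff.1 (hrep.mem_endStabilizer hgeo hft hiso)⟩,
    ⟨fun hall f hf => ?_, fun hle h hh hattrh => ?_⟩⟩
  · -- `f g f⁻¹` attracts to `f γ₁ ~ γ₁` and is repelled from `f γ₂`, so `f γ₂ ~ γ₂`
    have hconj : AttractsTo (f * g * f⁻¹) γ₁ :=
      (hattr.conj hiso f).trans_asympRays hgeo hft hf hattr.1
    have hrep := (hall g hhyp hattr).conj hiso f
    rw [← conj_inv] at hrep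
    exact hrep.asympRays hgeo hft (hall _ (hhyp.conj hiso f) hconj)
  · exact attractsTo_inv_of_mem_endStabilizer hNPC hiso hh hattrh hray₂ hopp
      (hle (hattrh.mem_endStabilizer hgeo hft hiso))
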